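/- Let P be a partition of a positive integer n, let b_1 < b_2 < … < b_r be positive integers with b_{i+1} ≥ b_i + 2 for 1 ≤ i < r, let u ∈ {1, …, r}, and let a = b_u + 1; if u < r assume moreover a ≤ b_{u+1} − 2. Then the sequence b_1, …, b_{u−1}, a, b_{u+1}, …, b_r defines an r-U-chain in D_P and, as integers, |U_{b_1,…,b_{u−1},a,b_{u+1},…,b_r}| − |U_{b_1,…,b_r}| = (a − 2u + 1)·(n_{a+1} − n_{a−1}). -/

import Mathlib

/-!
Common definitions for the poset `D_P` attached to a partition `P` of `n`,
its `U`-chains, the quantity `s(P,a)` (cardinality of a simple `U`-chain),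
and `U`-processes, following Khatami, "The poset of the nilpotent commutator
of a nilpotent matrix".

A partition of `n` is encoded by its multiplicity function `np : ℕ →₀ ℕ`
(`np p` = number of parts equal to `p`), with `np 0 = 0` and `Σ p·np p = n`.
-/

/-- Vertices are triples `(u, p, k)`. -/
abbrev Vtx : Type := ℕ × ℕ × ℕ

/-- `np` is the multiplicity function of a partition of `n`. -/
def IsPartitionOf (n : ℕ) (np : ℕ →₀ ℕ) : Prop :=
  np 0 = 0 ∧ (np.sum fun p m => p * m) = n

/-- The vertex set of the diagram `D_P`: triples `(u,p,k)` with
`1 ≤ u ≤ p` and `1 ≤ k ≤ np p`. -/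
def vertexSet (np : ℕ →₀ ℕ) : Set Vtx :=
  {v | 1 ≤ v.1 ∧ v.1 ≤ v.2.1 ∧ 1 ≤ v.2.2 ∧ v.2.2 ≤ np v.2.1}

/-- The set `S_i` for the value `a`:
`S_i = {(u,p,k) : p ∈ {a, a+1}, i ≤ u ≤ p−i+1} ∪ {(u,p,k) : p > a+1, u ∈ {i, p−i+1}}`,
a subset of the vertex set of `D_P`.  (The condition `u ≤ p - i + 1` is written
as `u + i ≤ p + 1` to avoid truncated subtraction.) -/
def Sset (np : ℕ →₀ ℕ) (i a : ℕ) : Set Vtx :=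
  {v ∈ vertexSet np |
    ((v.2.1 = a ∨ v.2.1 = a + 1) ∧ i ≤ v.1 ∧ v.1 + i ≤ v.2.1 + 1) ∨
    (a + 1 < v.2.1 ∧ (v.1 = i ∨ v.1 + i = v.2.1 + 1))}

/-- The `r`-`U`-chain `U_{b 1, …, b r} = S_1 ∪ ⋯ ∪ S_r` in `D_P`. -/
def UChain (np : ℕ →₀ ℕ) (b : ℕ → ℕ) (r : ℕ) : Set Vtx :=
  ⋃ i ∈ Set.Icc 1 r, Sset np i (b i)

/-- `b 1 < b 2 < ⋯ < b r` are positive with consecutive differences at least `2`. -/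
def ValidSeq (b : ℕ → ℕ) (r : ℕ) : Prop :=
  (∀ i, 1 ≤ i → i ≤ r → 1 ≤ b i) ∧ ∀ i, 1 ≤ i → i < r → b i + 2 ≤ b (i + 1)

/-- `s(P,a) = a·n_a + (a+1)·n_{a+1} + 2·Σ_{p>a+1} n_p`, the cardinality of the
simple `U`-chain `U_a` in `D_P`. -/
def sVal (np : ℕ →₀ ℕ) (a : ℕ) : ℕ :=
  a * np a + (a + 1) * np (a + 1) +
    2 * ∑ p ∈ np.support.filter (fun p => a + 1 < p), np p

/-- `a` is optimal for `P`: `U_a` is a maximum simple `U`-chain in `D_P`. -/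
def OptimalFor (np : ℕ →₀ ℕ) (a : ℕ) : Prop :=
  1 ≤ a ∧ ∀ c, 1 ≤ c → sVal np c ≤ sVal np a

/-- `p` is a part of the partition with multiplicity function `np`. -/
def IsPart (np : ℕ →₀ ℕ) (p : ℕ) : Prop := 0 < p ∧ 0 < np p

/-- The covering relation of the poset `D_P`:  `Cov np x y` means `y` covers `x`.
(i)  for consecutive parts `q < p` and `1 ≤ u ≤ q`, `(u, p, np p)` is covered by `(u, q, 1)`;
(ii) for consecutive parts `p < q` and `1 ≤ u ≤ p`, `(u, p, np p)` is covered by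
     `(u + q − p, q, 1)`;
(iii) for a part `p`, `1 ≤ u ≤ p`, `1 ≤ k < np p`, `(u,p,k)` is covered by `(u,p,k+1)`;
(iv) for an isolated part `p` (neither `p−1` nor `p+1` is a part) and `1 ≤ u < p`,
     `(u, p, np p)` is covered by `(u+1, p, 1)`. -/
def Cov (np : ℕ →₀ ℕ) (x y : Vtx) : Prop :=
  (∃ p q u, IsPart np p ∧ IsPart np q ∧ q < p ∧
      (∀ t, q < t → t < p → ¬ IsPart np t) ∧
      1 ≤ u ∧ u ≤ q ∧ x = (u, p, np p) ∧ y = (u, q, 1)) ∨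
  (∃ p q u, IsPart np p ∧ IsPart np q ∧ p < q ∧
      (∀ t, p < t → t < q → ¬ IsPart np t) ∧
      1 ≤ u ∧ u ≤ p ∧ x = (u, p, np p) ∧ y = (u + (q - p), q, 1)) ∨
  (∃ p u k, IsPart np p ∧ 1 ≤ u ∧ u ≤ p ∧ 1 ≤ k ∧ k < np p ∧
      x = (u, p, k) ∧ y = (u, p, k + 1)) ∨
  (∃ p u, IsPart np p ∧ ¬ IsPart np (p - 1) ∧ ¬ IsPart np (p + 1) ∧
      1 ≤ u ∧ u < p ∧ x = (u, p, np p) ∧ y = (u + 1, p, 1))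

/-- The partial order of `D_P`: reflexive–transitive closure of the covering relation. -/
def leD (np : ℕ →₀ ℕ) : Vtx → Vtx → Prop := Relation.ReflTransGen (Cov np)

/-- A chain in `D_P`: a subset of the vertex set that is totally ordered by `leD`. -/
def IsChainD (np : ℕ →₀ ℕ) (C : Set Vtx) : Prop :=
  C ⊆ vertexSet np ∧ ∀ x ∈ C, ∀ y ∈ C, leD np x y ∨ leD np y x

/-- `u_r(P)`: the maximum cardinality of an `r`-`U`-chain in `D_P`. -/
noncomputable def uMax (np : ℕ →₀ ℕ) (r : ℕ) : ℕ :=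
  sSup {m | ∃ b : ℕ → ℕ, ValidSeq b r ∧ (UChain np b r).ncard = m}

/-- The relabeling injection `ι : D_{P'} → D_P` attached to removing `U_a`. -/
def iotaMap (a : ℕ) (v : Vtx) : Vtx :=
  if v.2.1 < a then v else (v.1 + 1, v.2.1 + 2, v.2.2)

/-- `iotaComp aa i = ι_1 ∘ ⋯ ∘ ι_i`, where `ι_j` is the relabeling map for `aa j`. -/
def iotaComp (aa : ℕ → ℕ) : ℕ → Vtx → Vtx
  | 0 => id
  | i + 1 => iotaComp aa i ∘ iotaMap (aa (i + 1))

/-- `(P_1, …, P_{r+1}; a_1, …, a_r)` is a `U`-process of length `r` for `P`: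
`P_1 = P`, each `a_i` is optimal for `P_i`, and `P_{i+1}` is obtained from `P_i`
by deleting the parts equal to `a_i` or `a_i + 1` and decreasing by `2` every
part greater than `a_i + 1`. -/
def IsUProcess (r : ℕ) (np : ℕ →₀ ℕ) (Ps : ℕ → ℕ →₀ ℕ) (aa : ℕ → ℕ) : Prop :=
  Ps 1 = np ∧
    ∀ i, 1 ≤ i → i ≤ r →
      OptimalFor (Ps i) (aa i) ∧
        ∀ m, Ps (i + 1) m = if m < aa i then Ps i m else Ps i (m + 2)

/-- The subset `C_i = (ι_1 ∘ ⋯ ∘ ι_{i−1})(U_{a_i}) ⊆ D_P` of a `U`-process. -/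
def Cset (Ps : ℕ → ℕ →₀ ℕ) (aa : ℕ → ℕ) (i : ℕ) : Set Vtx :=
  iotaComp aa (i - 1) '' Sset (Ps i) 1 (aa i)


/-! The cardinality of `S_i` for the value `a` is computed row by row: the vertices `(u, p, k)`
with fixed `p` form `n_p` copies of a row of length `p`, and `S_i` meets each copy in the columns
`sRow i a p`. The sets `S_i` of a valid sequence are pairwise disjoint, and replacing `b_u` by
`b_u + 1` changes only `S_u`, where it changes only the widths of rows `b_u` and `b_u + 2`, by
`-(b_u + 2 - 2u)` and `+(b_u + 2 - 2u)`. -/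

open Finset

namespace ValidSeq

variable {b : ℕ → ℕ} {r : ℕ}

lemma add_two_mul_le (hb : ValidSeq b r) {i j : ℕ} (hi : 1 ≤ i) (hij : i ≤ j) (hjr : j ≤ r) :
    b i + 2 * (j - i) ≤ b j := by
  induction j, hij using Nat.le_induction with
  | base => simp
  | succ j hij ih =>
    have := hb.2 j (by omega) (by omega)
    have := ih (by omega)
    omega

lemma two_mul_le (hb : ValidSeq b r) {i : ℕ} (hi : 1 ≤ i) (hir : i ≤ r) : 2 * i ≤ b i + 1 := by
  have := hb.add_two_mul_le le_rfl hi hir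
  have := hb.1 1 le_rfl (by omega)
  omega

lemma add_two_le (hb : ValidSeq b r) {i j : ℕ} (hi : 1 ≤ i) (hij : i < j) (hjr : j ≤ r) :
    b i + 2 ≤ b j := by
  have := hb.add_two_mul_le hi hij.le hjr
  omega

lemma update_of_le {u a : ℕ} (hb : ValidSeq b r) (hua : b u ≤ a)
    (hnext : u < r → a + 2 ≤ b (u + 1)) :
    ValidSeq (fun j => if j = u then a else b j) r := by
  refine ⟨fun i hi hir => ?_, fun i hi hir => ?_⟩ <;> dsimp only
  · have := hb.1 i hi hir
    split_ifs with h <;> subst_vars <;> omega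
  · have := hb.2 i hi hir
    split_ifs with h h' h' <;> subst_vars <;> omega

end ValidSeq

def sRow (i a p : ℕ) : Finset ℕ :=
  if p = a ∨ p = a + 1 then Icc i (p + 1 - i) else if a + 1 < p then {i, p + 1 - i} else ∅

def rowsFinset (np : ℕ →₀ ℕ) (C : ℕ → Finset ℕ) : Finset Vtx :=
  np.support.biUnion fun p => C p ×ˢ {p} ×ˢ Icc 1 (np p)

lemma card_rowsFinset (np : ℕ →₀ ℕ) (C : ℕ → Finset ℕ) :
    #(rowsFinset np C) = ∑ p ∈ np.support, #(C p) * np p := by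
  rw [rowsFinset, card_biUnion]
  · simp [card_product]
  · intro p _ q _ hpq
    simp only [disjoint_left, mem_product, mem_singleton]
    rintro _ ⟨-, rfl, -⟩ ⟨-, h, -⟩
    exact hpq h

lemma Sset_eq_rowsFinset (np : ℕ →₀ ℕ) {i a : ℕ} (hi : 1 ≤ i) (hia : 2 * i ≤ a + 1) :
    Sset np i a = rowsFinset np (sRow i a) := by
  ext ⟨u, p, k⟩
  simp only [Sset, vertexSet, rowsFinset, sRow, Set.mem_ofPred_eq, coe_biUnion, Set.mem_iUnion,
    mem_coe, Finsupp.mem_support_iff, mem_product, mem_singleton, mem_Icc, exists_prop]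
  constructor
  · rintro ⟨⟨-, -, hk1, hkp⟩, h⟩
    refine ⟨p, by omega, ?_, rfl, hk1, hkp⟩
    split_ifs <;> simp only [mem_Icc, mem_insert, mem_singleton, notMem_empty] <;> omega
  · rintro ⟨p, -, hu, rfl, hk1, hkp⟩
    split_ifs at hu <;> simp only [mem_Icc, mem_insert, mem_singleton, notMem_empty] at hu <;>
      omega

lemma card_sRow {i a : ℕ} (hi : 1 ≤ i) (hia : 2 * i ≤ a + 1) (p : ℕ) :
    #(sRow i a p) = if p = a ∨ p = a + 1 then p + 2 - 2 * i else if a + 1 < p then 2 else 0 := by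
  unfold sRow
  split_ifs
  · rw [Nat.card_Icc]; omega
  · exact card_pair (by omega)
  · rfl

lemma ncard_Sset (np : ℕ →₀ ℕ) {i a : ℕ} (hi : 1 ≤ i) (hia : 2 * i ≤ a + 1) :
    (Sset np i a).ncard = ∑ p ∈ np.support, #(sRow i a p) * np p := by
  rw [Sset_eq_rowsFinset np hi hia, Set.ncard_coe_finset, card_rowsFinset]

lemma card_sRow_succ_sub {i c : ℕ} (hi : 1 ≤ i) (hic : 2 * i ≤ c + 1) (p : ℕ) :
    (#(sRow i (c + 1) p) : ℤ) - #(sRow i c p) =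
      if p = c + 2 then (c + 2 - 2 * i : ℤ) else if p = c then -(c + 2 - 2 * i : ℤ) else 0 := by
  rw [card_sRow hi (by omega), card_sRow hi hic]
  split_ifs <;> omega

lemma ncard_Sset_succ_sub (np : ℕ →₀ ℕ) {i c : ℕ} (hi : 1 ≤ i) (hic : 2 * i ≤ c + 1) :
    ((Sset np i (c + 1)).ncard : ℤ) - (Sset np i c).ncard =
      (c + 2 - 2 * i : ℤ) * (np (c + 2) - np c) := by
  rw [ncard_Sset np hi (by omega), ncard_Sset np hi hic]
  push_cast
  rw [← sum_sub_distrib]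
  simp_rw [← sub_mul, card_sRow_succ_sub hi hic]
  rw [sum_eq_add (c + 2) c (by omega)]
  · rw [if_pos rfl, if_neg (by omega : c ≠ c + 2), if_pos rfl]
    ring
  · intro p _ hp
    simp [hp.1, hp.2]
  all_goals intro h; simp [Finsupp.notMem_support_iff.mp h]

lemma Sset_disjoint (np : ℕ →₀ ℕ) {i j a c : ℕ} (hij : i < j) (hjc : 2 * j ≤ c + 1)
    (hac : a + 2 ≤ c) : Disjoint (Sset np i a) (Sset np j c) := by
  rw [Set.disjoint_left]
  rintro ⟨u, p, k⟩ hi hj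
  simp only [Sset, vertexSet, Set.mem_ofPred_eq] at hi hj
  omega

lemma ValidSeq.ncard_UChain (np : ℕ →₀ ℕ) {b : ℕ → ℕ} {r : ℕ} (hb : ValidSeq b r) :
    (UChain np b r).ncard = ∑ i ∈ Icc 1 r, (Sset np i (b i)).ncard := by
  have hfin : ∀ i ∈ (Icc 1 r : Set ℕ), (Sset np i (b i)).Finite := fun i hi => by
    rw [coe_Icc, Set.mem_Icc] at hi
    rw [Sset_eq_rowsFinset np hi.1 (hb.two_mul_le hi.1 hi.2)]
    exact finite_toSet _
  have hdisj : (Icc 1 r : Set ℕ).PairwiseDisjoint fun i => Sset np i (b i) := by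
    intro i hi j hj hij
    rw [mem_coe, mem_Icc] at hi hj
    rcases hij.lt_or_gt with h | h
    · exact Sset_disjoint np h (hb.two_mul_le hj.1 hj.2) (hb.add_two_le hi.1 h hj.2)
    · exact (Sset_disjoint np h (hb.two_mul_le hi.1 hi.2) (hb.add_two_le hj.1 h hi.2)).symm
  rw [UChain, ← coe_Icc, (finite_toSet _).ncard_biUnion hfin hdisj, finsum_mem_coe_finset]

theorem replacement_case_two_two_general
    (np : ℕ →₀ ℕ)
    (r : ℕ) (b : ℕ → ℕ) (hb : ValidSeq b r)
    (u : ℕ) (hu1 : 1 ≤ u) (hur : u ≤ r)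
    (a : ℕ) (ha : a = b u + 1) (hnext : u < r → a + 2 ≤ b (u + 1)) :
    ValidSeq (fun j => if j = u then a else b j) r ∧
    ((UChain np (fun j => if j = u then a else b j) r).ncard : ℤ)
        - ((UChain np b r).ncard : ℤ)
      = ((a : ℤ) - 2 * (u : ℤ) + 1) * ((np (a + 1) : ℤ) - (np (a - 1) : ℤ)) := by
  have hb' := hb.update_of_le (by omega) hnext
  refine ⟨hb', ?_⟩
  rw [hb'.ncard_UChain, hb.ncard_UChain]
  push_cast
  rw [← sum_sub_distrib,
    sum_eq_single_of_mem u (mem_Icc.2 ⟨hu1, hur⟩) fun i _ hi => by simp [hi]]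
  subst ha
  rw [if_pos rfl, ncard_Sset_succ_sub np hu1 (hb.two_mul_le hu1 hur), Nat.add_sub_cancel]
  push_cast
  ring

/-- Case 2.2 of Proposition 1.13: if `a = b_u + 1` (and `a ≤ b_{u+1} − 2`
when `u < r`), then `b_1, …, b_{u−1}, a, b_{u+1}, …, b_r` defines an `r`-`U`-chain and
`|U_{b_1,…,b_{u−1},a,b_{u+1},…,b_r}| − |U_{b_1,…,b_r}| = (a − 2u + 1)·(n_{a+1} − n_{a−1})`. -/
theorem replacement_case_two_two
    (n : ℕ) (hn : 0 < n) (np : ℕ →₀ ℕ) (hP : IsPartitionOf n np)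
    (r : ℕ) (b : ℕ → ℕ) (hb : ValidSeq b r)
    (u : ℕ) (hu1 : 1 ≤ u) (hur : u ≤ r)
    (a : ℕ) (ha : a = b u + 1) (hnext : u < r → a + 2 ≤ b (u + 1)) :
    ValidSeq (fun j => if j = u then a else b j) r ∧
    ((UChain np (fun j => if j = u then a else b j) r).ncard : ℤ)
        - ((UChain np b r).ncard : ℤ)
      = ((a : ℤ) - 2 * (u : ℤ) + 1) * ((np (a + 1) : ℤ) - (np (a - 1) : ℤ)) :=
  replacement_case_two_two_general np r b hb u hu1 hur a ha hnext
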